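/- arXiv:2603.29361 — 6 statements merged into one kernel-verified Lean document; each statement's English description precedes it below -/
import Mathlib

section
/- Let n ≥ 1 and m be natural numbers, let t : Fin n → ((Fin m → Bool) → Bool), define the DNF classifier φ : (Fin m → Bool) → Bool by φ x = true iff ∃ i, t i x = true, and define the majority-vote classifier κ : (Fin m → Bool) → Bool by κ x = true iff (Finset.univ.filter (fun i => t i x = true)).card + (n−1) > n − (Finset.univ.filter (fun i => t i x = true)).card (n term-trees plus n−1 constant class-1 trees). Let v : Fin m → Bool satisfy φ v = true. Then for every Finset X ⊆ Fin m: X is minimal (with respect to ⊆) such that every x : Fin m → Bool with x i = v i for all i ∈ X satisfies κ x = true, if and only if X is minimal such that every such x satisfies φ x = true. In other words, X is an abductive explanation (AXp) of κ at v for class 1 if and only if the conjunction ⋀_{i∈X}(x_i = v_i) is a prime implicant of φ. -/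
/-! The n − 1 constant class-1 trees make a single positive term-tree a strict majority,
while with no positive term-tree class 0 wins; so κ = φ, and equal classifiers have the
same (weak) AXps. -/

theorem Finset.sub_card_filter_lt_card_filter_add_sub_one_iff {α : Type*} (s : Finset α)
    (p : α → Prop) [DecidablePred p] (n : ℕ) :
    n - (s.filter p).card < (s.filter p).card + (n - 1) ↔ ∃ a ∈ s, p a := by
  rw [← Finset.filter_nonempty_iff, ← Finset.card_pos]
  omega

theorem rfmv_axp_iff_prime_implicant_general (n m : ℕ)
    (t : Fin n → ((Fin m → Bool) → Bool))
    (φ : (Fin m → Bool) → Bool)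
    (hφ : ∀ x, φ x = true ↔ ∃ i, t i x = true)
    (κ : (Fin m → Bool) → Bool)
    (hκ : ∀ x, κ x = true ↔
      ((Finset.univ.filter (fun i => t i x = true)).card + (n - 1) >
        n - (Finset.univ.filter (fun i => t i x = true)).card))
    (v : Fin m → Bool) :
    ∀ X : Finset (Fin m),
      ((∀ x : Fin m → Bool, (∀ i ∈ X, x i = v i) → κ x = true) ∧
        ∀ X' ⊂ X, ¬ (∀ x : Fin m → Bool, (∀ i ∈ X', x i = v i) → κ x = true)) ↔
      ((∀ x : Fin m → Bool, (∀ i ∈ X, x i = v i) → φ x = true) ∧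
        ∀ X' ⊂ X, ¬ (∀ x : Fin m → Bool, (∀ i ∈ X', x i = v i) → φ x = true)) := by
  have hκφ : κ = φ := funext fun x => Bool.eq_iff_iff.mpr <| by
    rw [hκ, hφ, gt_iff_lt, Finset.sub_card_filter_lt_card_filter_add_sub_one_iff]
    simp only [Finset.mem_univ, true_and]
  subst hκφ
  exact fun X => Iff.rfl

theorem rfmv_axp_iff_prime_implicant (n m : ℕ) (hn : 1 ≤ n)
    (t : Fin n → ((Fin m → Bool) → Bool))
    (φ : (Fin m → Bool) → Bool)
    (hφ : ∀ x, φ x = true ↔ ∃ i, t i x = true)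
    (κ : (Fin m → Bool) → Bool)
    (hκ : ∀ x, κ x = true ↔
      ((Finset.univ.filter (fun i => t i x = true)).card + (n - 1) >
        n - (Finset.univ.filter (fun i => t i x = true)).card))
    (v : Fin m → Bool) (hv : φ v = true) :
    ∀ X : Finset (Fin m),
      ((∀ x : Fin m → Bool, (∀ i ∈ X, x i = v i) → κ x = true) ∧
        ∀ X' ⊂ X, ¬ (∀ x : Fin m → Bool, (∀ i ∈ X', x i = v i) → κ x = true)) ↔
      ((∀ x : Fin m → Bool, (∀ i ∈ X, x i = v i) → φ x = true) ∧
        ∀ X' ⊂ X, ¬ (∀ x : Fin m → Bool, (∀ i ∈ X', x i = v i) → φ x = true)) :=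
  rfmv_axp_iff_prime_implicant_general n m t φ hφ κ hκ v
end

section
/- Let T : Fin n → DTree (Fin K) be a random forest with majority voting over m real-valued features with K classes. Then there exists a boosted-tree model — namely, for each class c : Fin K a family B c : Fin n → DTree ℝ of real-weighted decision trees, each B c t having the same node structure (and hence at most as many nodes) as T t — such that for every x : Fin m → ℝ and every class c : Fin K, the boosted-tree score ∑_{t : Fin n} eval (B c t) x equals the number of trees voting for c, i.e. (Finset.univ.filter (fun t => eval (T t) x = c)).card. Consequently, for every x the set of classes maximizing the boosted-tree score coincides with the set of classes maximizing the majority-vote count, so the boosted tree is equivalent to the random forest and its total size is polynomial (at most K·n trees, each no larger than the corresponding original tree). -/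
/-- Decision trees over `m` real-valued features with labels in `L`. -/
inductive DTree (m : ℕ) (L : Type) : Type
  | leaf (c : L) : DTree m L
  | node (i : Fin m) (d : ℝ) (tl tr : DTree m L) : DTree m L

/-- Evaluation of a decision tree on an input point. -/
noncomputable def DTree.eval {m : ℕ} {L : Type} : DTree m L → (Fin m → ℝ) → L
  | .leaf c, _ => c
  | .node i d tl tr, x => if x i < d then tl.eval x else tr.eval x

/-- Two trees (with possibly different label types) have the same node structure:
same internal nodes with the same features and thresholds. -/
def DTree.sameShape {m : ℕ} {L L' : Type} : DTree m L → DTree m L' → Prop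
  | .leaf _, .leaf _ => True
  | .node i d tl tr, .node i' d' tl' tr' =>
      i = i' ∧ d = d' ∧ tl.sameShape tl' ∧ tr.sameShape tr'
  | _, _ => False

/-!
Replace every leaf label `l` of the `t`-th tree by the weight `1` if `l = c` and `0` otherwise.
Each relabelled tree evaluates to the indicator that tree `t` votes for `c`, so the summed
score of class `c` is its vote count, and maximizing the score is maximizing the vote.
-/

namespace DTree

variable {m : ℕ} {L L' : Type}

def map (f : L → L') : DTree m L → DTree m L'
  | .leaf c => .leaf (f c)
  | .node i d tl tr => .node i d (tl.map f) (tr.map f)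

theorem sameShape_map (f : L → L') (t : DTree m L) : (t.map f).sameShape t := by
  induction t with
  | leaf => trivial
  | node i d tl tr ihl ihr => exact ⟨rfl, rfl, ihl, ihr⟩

theorem eval_map (f : L → L') (t : DTree m L) (x : Fin m → ℝ) :
    (t.map f).eval x = f (t.eval x) := by
  induction t with
  | leaf => rfl
  | node i d tl tr ihl ihr =>
    simp only [map, eval]
    split_ifs
    exacts [ihl, ihr]

theorem sum_eval_map_ite_eq_card_filter {ι R : Type} [Fintype ι] [DecidableEq L]
    [AddCommMonoidWithOne R] (T : ι → DTree m L) (x : Fin m → ℝ) (c : L) :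
    ∑ t, ((T t).map fun l => if l = c then (1 : R) else 0).eval x =
      (Finset.univ.filter fun t => (T t).eval x = c).card := by
  simp only [eval_map, Finset.natCast_card_filter]

end DTree

/-- Every random forest with majority voting has an equivalent boosted tree of
polynomial size: for each class `c`, a family of real-weighted trees of the same
shape as the original trees, whose summed score at `x` equals the vote count of
class `c`; consequently the sets of maximizing classes coincide on every input. -/
theorem rfmv_to_bt (m n K : ℕ) (T : Fin n → DTree m (Fin K)) :
    ∃ B : Fin K → Fin n → DTree m ℝ,
      (∀ (c : Fin K) (t : Fin n), DTree.sameShape (B c t) (T t)) ∧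
      (∀ (x : Fin m → ℝ) (c : Fin K),
        (∑ t : Fin n, (B c t).eval x) =
          ((Finset.univ.filter (fun t : Fin n => (T t).eval x = c)).card : ℝ)) ∧
      (∀ x : Fin m → ℝ,
        {c : Fin K | ∀ c' : Fin K,
            (∑ t : Fin n, (B c' t).eval x) ≤ (∑ t : Fin n, (B c t).eval x)} =
        {c : Fin K | ∀ c' : Fin K,
            (Finset.univ.filter (fun t : Fin n => (T t).eval x = c')).card ≤
              (Finset.univ.filter (fun t : Fin n => (T t).eval x = c)).card}) := by
  refine ⟨fun c t => (T t).map fun l => if l = c then (1 : ℝ) else 0,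
    fun c t => DTree.sameShape_map _ _, DTree.sum_eval_map_ite_eq_card_filter T, fun x => ?_⟩
  simp only [DTree.sum_eval_map_ite_eq_card_filter, Nat.cast_le]
end

section
/- Let α be a finite type (with decidable equality), let P : Finset α → Prop be decidable and monotone, i.e., for all Finsets X ⊆ Y, P X implies P Y, and assume P Finset.univ holds. Let ℓ be a list enumerating every element of α exactly once, and define the deletion-based result X₀ := ℓ.foldl (fun X i => if P (X.erase i) then X.erase i else X) Finset.univ. Then P X₀ holds, for every i ∈ X₀ one has ¬ P (X₀.erase i), and consequently no proper subset Y ⊊ X₀ satisfies P; that is, X₀ is a subset-minimal set satisfying P. -/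
namespace DeletionSearch

variable {α : Type*} [DecidableEq α] (P : Finset α → Prop) [DecidablePred P]

def step (X : Finset α) (i : α) : Finset α :=
  if P (X.erase i) then X.erase i else X

variable {P}

theorem foldl_step_subset (ℓ : List α) (X : Finset α) : ℓ.foldl (step P) X ⊆ X := by
  induction ℓ generalizing X with
  | nil => exact subset_rfl
  | cons a ℓ ih =>
    rw [List.foldl_cons, step]
    split_ifs
    · exact (ih _).trans (X.erase_subset a)
    · exact ih X

theorem foldl_step_pred (ℓ : List α) {X : Finset α} (hX : P X) : P (ℓ.foldl (step P) X) := by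
  induction ℓ generalizing X with
  | nil => exact hX
  | cons a ℓ ih =>
    rw [List.foldl_cons, step]
    split_ifs with h
    · exact ih h
    · exact ih hX

/-- Once `i` has been kept, the set only shrinks afterwards, so by monotonicity removing `i`
from the final set still breaks `P`. -/
theorem foldl_step_not_pred_erase (hmono : ∀ X Y : Finset α, X ⊆ Y → P X → P Y)
    {ℓ : List α} {i : α} (hi : i ∈ ℓ) (X : Finset α) (hiR : i ∈ ℓ.foldl (step P) X) :
    ¬ P ((ℓ.foldl (step P) X).erase i) := by
  induction ℓ generalizing X with
  | nil => cases hi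
  | cons a ℓ ih =>
    rw [List.foldl_cons] at hiR ⊢
    rcases List.mem_cons.mp hi with rfl | hi
    · rw [step] at hiR ⊢
      split_ifs at hiR ⊢ with h
      · exact absurd (foldl_step_subset ℓ _ hiR) (X.notMem_erase i)
      · exact fun hP => h (hmono _ _ (Finset.erase_subset_erase i (foldl_step_subset ℓ X)) hP)
    · exact ih hi _ hiR

end DeletionSearch

theorem not_of_ssubset_of_forall_not_erase {α : Type*} [DecidableEq α] {P : Finset α → Prop}
    (hmono : ∀ X Y : Finset α, X ⊆ Y → P X → P Y) {X Y : Finset α}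
    (hX : ∀ i ∈ X, ¬ P (X.erase i)) (hYX : Y ⊂ X) : ¬ P Y := by
  obtain ⟨i, hiX, hiY⟩ := Finset.exists_of_ssubset hYX
  exact fun hY => hX i hiX (hmono _ _ (Finset.subset_erase.mpr ⟨hYX.subset, hiY⟩) hY)

open DeletionSearch in
/-- Correctness of the generic deletion-based (linear search) algorithm for
extracting a subset-minimal set satisfying a monotone predicate. -/
theorem deletion_based_minimal {α : Type*} [Fintype α] [DecidableEq α]
    (P : Finset α → Prop) [DecidablePred P]
    (hmono : ∀ X Y : Finset α, X ⊆ Y → P X → P Y)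
    (huniv : P Finset.univ)
    (ℓ : List α) (hℓ : ∀ a : α, ℓ.count a = 1) :
    let X₀ := ℓ.foldl (fun X i => if P (X.erase i) then X.erase i else X) Finset.univ
    P X₀ ∧ (∀ i ∈ X₀, ¬ P (X₀.erase i)) ∧ ∀ Y : Finset α, Y ⊂ X₀ → ¬ P Y := by
  change let X₀ := ℓ.foldl (step P) Finset.univ; _
  intro X₀
  have hmem (a : α) : a ∈ ℓ := List.count_pos_iff.mp (by rw [hℓ a]; exact one_pos)
  have hcrit : ∀ i ∈ X₀, ¬ P (X₀.erase i) := fun i =>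
    foldl_step_not_pred_erase hmono (hmem i) Finset.univ
  exact ⟨foldl_step_pred ℓ huniv, hcrit, fun _ => not_of_ssubset_of_forall_not_erase hmono hcrit⟩
end

section
/- Fix m : ℕ, feature domains D : Fin m → Type, the feature space 𝔽 = Π i, D i, a type K of classes, a classifier κ : 𝔽 → K, and an instance v ∈ 𝔽 with κ v = c. Define WAXp(X) for Finsets X ⊆ Fin m by: WAXp(X) holds iff κ x = c for every x ∈ 𝔽 with x i = v i for all i ∈ X. Then: (i) WAXp is monotone (X ⊆ Y and WAXp(X) imply WAXp(Y)); (ii) WAXp(Finset.univ) holds; and therefore (iii) assuming WAXp is decidable, the deletion-based result X₀ := ℓ.foldl (fun X i => if WAXp(X.erase i) then X.erase i else X) Finset.univ, where ℓ enumerates each element of Fin m exactly once, satisfies WAXp(X₀) while no proper subset of X₀ satisfies WAXp — i.e., the deletion-based algorithm returns an abductive explanation (AXp). -/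
/-! Deleting a feature only when what remains is still a weak AXp keeps the invariant
that the current set is a weak AXp. Once a feature `i` survives its own deletion test,
`X.erase i` failed to be a weak AXp; later steps only shrink `X`, so by monotonicity the
final set minus `i` fails too. Since every feature is tested, every proper subset of the
result lies inside the result minus some feature, hence is not a weak AXp. -/

namespace DeletionAXp

section Fold

variable {α : Type*} [DecidableEq α] (W : Finset α → Prop) [DecidablePred W]

def deleteIfWeak (X : Finset α) (i : α) : Finset α :=
  if W (X.erase i) then X.erase i else X

variable {W}

theorem deleteIfWeak_subset (X : Finset α) (i : α) : deleteIfWeak W X i ⊆ X := by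
  unfold deleteIfWeak
  split_ifs
  · exact Finset.erase_subset i X
  · exact subset_rfl

theorem not_erase_of_mem_deleteIfWeak {X : Finset α} {i : α}
    (hi : i ∈ deleteIfWeak W X i) : ¬ W (X.erase i) := by
  intro hW
  rw [deleteIfWeak, if_pos hW] at hi
  exact Finset.notMem_erase i X hi

theorem foldl_deleteIfWeak_subset (ℓ : List α) (X : Finset α) :
    ℓ.foldl (deleteIfWeak W) X ⊆ X := by
  induction ℓ generalizing X with
  | nil => exact subset_rfl
  | cons a ℓ ih => exact (ih _).trans (deleteIfWeak_subset X a)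

theorem foldl_deleteIfWeak_of_weak (ℓ : List α) {X : Finset α} (hX : W X) :
    W (ℓ.foldl (deleteIfWeak W) X) := by
  induction ℓ generalizing X with
  | nil => exact hX
  | cons a ℓ ih =>
    apply ih
    unfold deleteIfWeak
    split_ifs with h
    · exact h
    · exact hX

theorem not_erase_foldl_deleteIfWeak (hW : Monotone W) {ℓ : List α} {i : α} (hiℓ : i ∈ ℓ)
    (X : Finset α) (hi : i ∈ ℓ.foldl (deleteIfWeak W) X) :
    ¬ W ((ℓ.foldl (deleteIfWeak W) X).erase i) := by
  induction ℓ generalizing X with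
  | nil => cases hiℓ
  | cons a ℓ ih =>
    rw [List.foldl_cons] at hi ⊢
    by_cases hiℓ' : i ∈ ℓ
    · exact ih hiℓ' _ hi
    obtain rfl : i = a := by simpa [hiℓ'] using hiℓ
    have hsub := foldl_deleteIfWeak_subset (W := W) ℓ (deleteIfWeak W X i)
    have hstep : ¬ W (X.erase i) := not_erase_of_mem_deleteIfWeak (hsub hi)
    exact fun h => hstep <| hW
      (Finset.erase_subset_erase i (hsub.trans (deleteIfWeak_subset X i))) h

theorem not_weak_of_ssubset_foldl_deleteIfWeak (hW : Monotone W) {ℓ : List α}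
    (hℓ : ∀ i, i ∈ ℓ) (X : Finset α) {Y : Finset α}
    (hY : Y ⊂ ℓ.foldl (deleteIfWeak W) X) : ¬ W Y := by
  obtain ⟨i, hi, hiY⟩ := Finset.exists_of_ssubset hY
  have hYerase : Y ⊆ (ℓ.foldl (deleteIfWeak W) X).erase i := fun j hj =>
    Finset.mem_erase.mpr ⟨fun hji => hiY (hji ▸ hj), hY.subset hj⟩
  exact fun hWY => not_erase_foldl_deleteIfWeak hW (hℓ i) X hi (hW hYerase hWY)

end Fold

section WeakAXp

variable {ι : Type*} {D : ι → Type*} {K : Type*}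

def IsWeakAXp (κ : (∀ i, D i) → K) (v : ∀ i, D i) (c : K) (X : Finset ι) : Prop :=
  ∀ x : ∀ i, D i, (∀ i ∈ X, x i = v i) → κ x = c

theorem isWeakAXp_monotone (κ : (∀ i, D i) → K) (v : ∀ i, D i) (c : K) :
    Monotone (IsWeakAXp κ v c) :=
  fun _ _ hXY hX x hx => hX x fun i hi => hx i (hXY hi)

theorem isWeakAXp_univ [Fintype ι] {κ : (∀ i, D i) → K} {v : ∀ i, D i} {c : K}
    (hv : κ v = c) : IsWeakAXp κ v c Finset.univ := by
  intro x hx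
  obtain rfl : x = v := funext fun i => hx i (Finset.mem_univ i)
  exact hv

end WeakAXp

end DeletionAXp

open DeletionAXp in
/-- The weak-AXp predicate is monotone, holds for the full feature set, and the
deletion-based algorithm returns an abductive explanation (AXp): a weak AXp none
of whose proper subsets is a weak AXp. -/
theorem deletion_based_axp (m : ℕ) (D : Fin m → Type) (K : Type)
    (κ : (∀ i, D i) → K) (v : ∀ i, D i) (c : K) (hv : κ v = c)
    (WAXp : Finset (Fin m) → Prop)
    (hdef : ∀ X : Finset (Fin m),
      WAXp X ↔ ∀ x : ∀ i, D i, (∀ i ∈ X, x i = v i) → κ x = c)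
    [DecidablePred WAXp]
    (ℓ : List (Fin m)) (hℓ : ∀ a : Fin m, ℓ.count a = 1) :
    (∀ X Y : Finset (Fin m), X ⊆ Y → WAXp X → WAXp Y) ∧
    WAXp Finset.univ ∧
    WAXp (ℓ.foldl (fun X i => if WAXp (X.erase i) then X.erase i else X)
        Finset.univ) ∧
    (∀ Y : Finset (Fin m),
      Y ⊂ ℓ.foldl (fun X i => if WAXp (X.erase i) then X.erase i else X)
        Finset.univ → ¬ WAXp Y) := by
  obtain rfl : WAXp = IsWeakAXp κ v c := funext fun X => propext (hdef X)
  have hmono := isWeakAXp_monotone κ v c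
  have huniv := isWeakAXp_univ hv
  have hmem : ∀ i, i ∈ ℓ := fun i => List.count_pos_iff.mp (by rw [hℓ i]; exact one_pos)
  exact ⟨fun _ _ h => hmono h, huniv, foldl_deleteIfWeak_of_weak ℓ huniv,
    fun _ => not_weak_of_ssubset_foldl_deleteIfWeak hmono hmem _⟩
end

section
/- Fix m : ℕ, feature domains D : Fin m → Type, the feature space 𝔽 = Π i, D i, a type K of classes, a classifier κ : 𝔽 → K, and an instance v ∈ 𝔽 with κ v = c; assume κ is not constant, i.e., there exists x ∈ 𝔽 with κ x ≠ c. Define WCXp(Y) for Finsets Y ⊆ Fin m by: WCXp(Y) holds iff there exists x ∈ 𝔽 with x i = v i for all i ∉ Y and κ x ≠ c. Then: (i) WCXp is monotone (Y ⊆ Z and WCXp(Y) imply WCXp(Z)); (ii) WCXp(Finset.univ) holds; and therefore (iii) assuming WCXp is decidable, the deletion-based result Y₀ := ℓ.foldl (fun Y i => if WCXp(Y.erase i) then Y.erase i else Y) Finset.univ, where ℓ enumerates each element of Fin m exactly once, satisfies WCXp(Y₀) while no proper subset of Y₀ satisfies WCXp — i.e., the deletion-based algorithm returns a contrastive explanation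 (CXp). -/
section DeletionStep

variable {α : Type*} [DecidableEq α] (P : Finset α → Prop) [DecidablePred P]

def deletionStep (Y : Finset α) (i : α) : Finset α :=
  if P (Y.erase i) then Y.erase i else Y

variable {P}

lemma deletionStep_subset (Y : Finset α) (i : α) : deletionStep P Y i ⊆ Y := by
  unfold deletionStep
  split
  · exact Finset.erase_subset i Y
  · exact Finset.Subset.refl Y

lemma foldl_deletionStep_subset (l : List α) (Y : Finset α) :
    l.foldl (deletionStep P) Y ⊆ Y := by
  induction l generalizing Y with
  | nil => exact Finset.Subset.refl Y
  | cons a t ih => exact (ih _).trans (deletionStep_subset Y a)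

lemma prop_foldl_deletionStep (l : List α) {Y : Finset α} (hY : P Y) :
    P (l.foldl (deletionStep P) Y) := by
  induction l generalizing Y with
  | nil => exact hY
  | cons a t ih =>
    apply ih
    unfold deletionStep
    split <;> assumption

/-- Once `i` has been kept, later deletions only shrink the set, so by monotonicity erasing `i`
from the final set cannot restore `P` either. -/
lemma not_prop_erase_foldl_deletionStep (hP : Monotone P) {l : List α} {i : α} (hi : i ∈ l)
    {Y : Finset α} (hiY : i ∈ l.foldl (deletionStep P) Y) :
    ¬ P ((l.foldl (deletionStep P) Y).erase i) := by
  induction l generalizing Y with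
  | nil => simp at hi
  | cons a t ih =>
    rw [List.foldl_cons] at hiY ⊢
    by_cases hit : i ∈ t
    · exact ih hit hiY
    obtain rfl : i = a := by simpa [hit] using hi
    have hkept : ¬ P (Y.erase i) := fun h => by
      simpa [deletionStep, h] using foldl_deletionStep_subset t _ hiY
    have hstep : deletionStep P Y i = Y := if_neg hkept
    rw [hstep] at hiY ⊢
    exact fun hfin => hkept (hP (Finset.erase_subset_erase i (foldl_deletionStep_subset t Y)) hfin)

theorem minimal_foldl_deletionStep (hP : Monotone P) {l : List α} {Y : Finset α} (hY : P Y)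
    (hl : ∀ i ∈ Y, i ∈ l) : Minimal P (l.foldl (deletionStep P) Y) :=
  (Finset.minimal_iff_forall_erase fun _ _ ht hts => hP hts ht).2
    ⟨prop_foldl_deletionStep l hY, fun i hi =>
      not_prop_erase_foldl_deletionStep hP (hl i (foldl_deletionStep_subset l Y hi)) hi⟩

end DeletionStep

lemma monotone_exists_eq_off {ι : Type*} {D : ι → Type*} (v : ∀ i, D i) (p : (∀ i, D i) → Prop) :
    Monotone fun Y : Finset ι => ∃ x : ∀ i, D i, (∀ i ∉ Y, x i = v i) ∧ p x :=
  fun _ _ hYZ ⟨x, hx, hpx⟩ => ⟨x, fun i hiZ => hx i fun hiY => hiZ (hYZ hiY), hpx⟩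

theorem deletion_based_cxp_general (m : ℕ) (D : Fin m → Type) (K : Type)
    (κ : (∀ i, D i) → K) (v : ∀ i, D i) (c : K)
    (hnonconst : ∃ x : ∀ i, D i, κ x ≠ c)
    (WCXp : Finset (Fin m) → Prop)
    (hdef : ∀ Y : Finset (Fin m),
      WCXp Y ↔ ∃ x : ∀ i, D i, (∀ i ∉ Y, x i = v i) ∧ κ x ≠ c)
    [DecidablePred WCXp]
    (ℓ : List (Fin m)) (hℓ : ∀ a : Fin m, ℓ.count a = 1) :
    (∀ Y Z : Finset (Fin m), Y ⊆ Z → WCXp Y → WCXp Z) ∧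
    WCXp Finset.univ ∧
    WCXp (ℓ.foldl (fun Y i => if WCXp (Y.erase i) then Y.erase i else Y)
        Finset.univ) ∧
    (∀ Z : Finset (Fin m),
      Z ⊂ ℓ.foldl (fun Y i => if WCXp (Y.erase i) then Y.erase i else Y)
        Finset.univ → ¬ WCXp Z) := by
  have hmono : Monotone WCXp := fun Y Z hYZ hY =>
    (hdef Z).2 (monotone_exists_eq_off v (κ · ≠ c) hYZ ((hdef Y).1 hY))
  have huniv : WCXp Finset.univ := by
    obtain ⟨x, hx⟩ := hnonconst
    exact (hdef _).2 ⟨x, by simp, hx⟩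
  have hℓ_mem (i : Fin m) : i ∈ ℓ := List.count_pos_iff.mp (by rw [hℓ i]; exact one_pos)
  have hmin : Minimal WCXp (ℓ.foldl (deletionStep WCXp) Finset.univ) :=
    minimal_foldl_deletionStep hmono huniv fun i _ => hℓ_mem i
  exact ⟨fun _ _ => @hmono _ _, huniv, hmin.prop, fun _ hZ => hmin.not_prop_of_lt hZ⟩

/-- The weak-CXp predicate is monotone, holds for the full feature set (when the
classifier is not constant), and the deletion-based algorithm returns a
contrastive explanation (CXp): a weak CXp none of whose proper subsets is a weak
CXp. -/
theorem deletion_based_cxp (m : ℕ) (D : Fin m → Type) (K : Type)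
    (κ : (∀ i, D i) → K) (v : ∀ i, D i) (c : K) (hv : κ v = c)
    (hnonconst : ∃ x : ∀ i, D i, κ x ≠ c)
    (WCXp : Finset (Fin m) → Prop)
    (hdef : ∀ Y : Finset (Fin m),
      WCXp Y ↔ ∃ x : ∀ i, D i, (∀ i ∉ Y, x i = v i) ∧ κ x ≠ c)
    [DecidablePred WCXp]
    (ℓ : List (Fin m)) (hℓ : ∀ a : Fin m, ℓ.count a = 1) :
    (∀ Y Z : Finset (Fin m), Y ⊆ Z → WCXp Y → WCXp Z) ∧
    WCXp Finset.univ ∧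
    WCXp (ℓ.foldl (fun Y i => if WCXp (Y.erase i) then Y.erase i else Y)
        Finset.univ) ∧
    (∀ Z : Finset (Fin m),
      Z ⊂ ℓ.foldl (fun Y i => if WCXp (Y.erase i) then Y.erase i else Y)
        Finset.univ → ¬ WCXp Z) :=
  deletion_based_cxp_general m D K κ v c hnonconst WCXp hdef ℓ hℓ
end

section
/- Fix m : ℕ, feature domains D : Fin m → Type, the feature space 𝔽 = Π i, D i, a type K of classes, a classifier κ : 𝔽 → K, and an instance v ∈ 𝔽 with κ v = c. Let 𝒞 be a family of Finsets of Fin m each of which is a weak CXp of the prediction κ v = c, and let X* be a Finset of minimum cardinality among all Finsets that intersect every member of 𝒞 (a minimum hitting set of 𝒞). If X* is itself a weak AXp (κ x = c for every x ∈ 𝔽 with x i = v i for all i ∈ X*), then every weak AXp X satisfies |X| ≥ |X*|; consequently X* is a weak AXp of minimum cardinality, and hence X* is an AXp (subset-minimal weak AXp) of smallest size. This establishes the correctness of the hitting-set–based algorithm for computing a smallest abductive explanation: the first minimum hitting set of the CXps found so far that is a valid weak AXp is guaranteed to be a smallest AXp. -/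
/-!
A weak AXp `X` meets every weak CXp `Y`: otherwise the counterexample witnessing `Y` agrees
with `v` on `X` and still changes the prediction. So every weak AXp is a hitting set of the
weak CXps found so far, and a minimum hitting set is no larger than any weak AXp; in particular
no proper subset of it is a weak AXp.
-/

section Explanations

variable {ι : Type*} {D : ι → Type*} {K : Type*}

def IsWeakAXp (κ : (∀ i, D i) → K) (v : ∀ i, D i) (c : K) (X : Finset ι) : Prop :=
  ∀ x : ∀ i, D i, (∀ i ∈ X, x i = v i) → κ x = c

def IsWeakCXp (κ : (∀ i, D i) → K) (v : ∀ i, D i) (c : K) (Y : Finset ι) : Prop :=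
  ∃ x : ∀ i, D i, (∀ i ∉ Y, x i = v i) ∧ κ x ≠ c

def IsHittingSet [DecidableEq ι] (𝒞 : Set (Finset ι)) (Z : Finset ι) : Prop :=
  ∀ Y ∈ 𝒞, (Z ∩ Y).Nonempty

variable {κ : (∀ i, D i) → K} {v : ∀ i, D i} {c : K}

theorem IsWeakAXp.inter_nonempty [DecidableEq ι] {X Y : Finset ι} (hX : IsWeakAXp κ v c X)
    (hY : IsWeakCXp κ v c Y) : (X ∩ Y).Nonempty := by
  obtain ⟨x, hxY, hxc⟩ := hY
  by_contra hdisj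
  exact hxc (hX x fun i hiX => hxY i fun hiY => hdisj ⟨i, Finset.mem_inter.2 ⟨hiX, hiY⟩⟩)

theorem IsWeakAXp.isHittingSet [DecidableEq ι] {X : Finset ι} {𝒞 : Set (Finset ι)}
    (hX : IsWeakAXp κ v c X) (h𝒞 : ∀ Y ∈ 𝒞, IsWeakCXp κ v c Y) : IsHittingSet 𝒞 X :=
  fun Y hY => hX.inter_nonempty (h𝒞 Y hY)

end Explanations

theorem smallest_axp_via_hitting_sets_general (m : ℕ) (D : Fin m → Type) (K : Type)
    (κ : (∀ i, D i) → K) (v : ∀ i, D i) (c : K)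
    (𝒞 : Set (Finset (Fin m)))
    (h𝒞 : ∀ Y ∈ 𝒞, ∃ x : ∀ i, D i, (∀ i ∉ Y, x i = v i) ∧ κ x ≠ c)
    (Xstar : Finset (Fin m))
    (hminhs : ∀ Z : Finset (Fin m), (∀ Y ∈ 𝒞, (Z ∩ Y).Nonempty) →
      Xstar.card ≤ Z.card) :
    (∀ X : Finset (Fin m),
        (∀ x : ∀ i, D i, (∀ i ∈ X, x i = v i) → κ x = c) →
        Xstar.card ≤ X.card) ∧
    (∀ X' : Finset (Fin m), X' ⊂ Xstar →
        ¬ ∀ x : ∀ i, D i, (∀ i ∈ X', x i = v i) → κ x = c) := by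
  have card_le : ∀ X, IsWeakAXp κ v c X → Xstar.card ≤ X.card :=
    fun X hX => hminhs X (hX.isHittingSet h𝒞)
  exact ⟨card_le, fun X' hX' hX'axp => (Finset.card_lt_card hX').not_ge (card_le X' hX'axp)⟩

/-- Correctness of the hitting-set-based algorithm for smallest abductive
explanations: if `Xstar` is a minimum-cardinality hitting set of a family `𝒞` of
weak CXps and `Xstar` is itself a weak AXp, then every weak AXp has cardinality
at least that of `Xstar`; hence `Xstar` is a weak AXp of minimum cardinality and
a (subset-minimal) AXp of smallest size. -/
theorem smallest_axp_via_hitting_sets (m : ℕ) (D : Fin m → Type) (K : Type)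
    (κ : (∀ i, D i) → K) (v : ∀ i, D i) (c : K) (hv : κ v = c)
    (𝒞 : Set (Finset (Fin m)))
    (h𝒞 : ∀ Y ∈ 𝒞, ∃ x : ∀ i, D i, (∀ i ∉ Y, x i = v i) ∧ κ x ≠ c)
    (Xstar : Finset (Fin m))
    (hhit : ∀ Y ∈ 𝒞, (Xstar ∩ Y).Nonempty)
    (hminhs : ∀ Z : Finset (Fin m), (∀ Y ∈ 𝒞, (Z ∩ Y).Nonempty) →
      Xstar.card ≤ Z.card)
    (hwaxp : ∀ x : ∀ i, D i, (∀ i ∈ Xstar, x i = v i) → κ x = c) :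
    (∀ X : Finset (Fin m),
        (∀ x : ∀ i, D i, (∀ i ∈ X, x i = v i) → κ x = c) →
        Xstar.card ≤ X.card) ∧
    (∀ X' : Finset (Fin m), X' ⊂ Xstar →
        ¬ ∀ x : ∀ i, D i, (∀ i ∈ X', x i = v i) → κ x = c) :=
  smallest_axp_via_hitting_sets_general m D K κ v c 𝒞 h𝒞 Xstar hminhs
end
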